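/- arXiv:2601.01194 — 3 statements merged into one kernel-verified Lean document; each statement's English description precedes it below -/
import Mathlib

section
/- Let (Ω, ℙ) be a probability space, X₀ : Ω → ℝ a random variable, and (Z_t)_{t∈ℕ} a sequence of random variables such that the family {X₀} ∪ {Z_t : t ∈ ℕ} is jointly independent and each Z_t has law gaussianReal 0 1. Let α : ℕ → ℝ with 0 ≤ α_t < 1 for all t, and define the recursion X_{t+1} = α_t · X_t + √(1 − α_t²) · Z_t. Then for every H ≥ 1, writing ᾱ_H = ∏_{t=0}^{H−1} α_t, the joint law of the pair (X₀, X_H) (as an ℝ × ℝ–valued random variable) equals the joint law of the pair (X₀, ᾱ_H · X₀ + √(1 − ᾱ_H²) · Z₀). -/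
open MeasureTheory ProbabilityTheory

lemma my_map_equiv_withDensity {α β : Type*} [MeasurableSpace α] [MeasurableSpace β]
    (e : α ≃ᵐ β) (μ : Measure α) {f : α → ENNReal} (hf : Measurable f) :
    Measure.map e (μ.withDensity f) = (Measure.map e μ).withDensity (f ∘ e.symm) := by
  ext s hs
  rw [Measure.map_apply e.measurable hs, withDensity_apply _ (e.measurable hs),
    withDensity_apply _ hs, Measure.restrict_map e.measurable hs,
    lintegral_map (hf.comp e.symm.measurable) e.measurable]
  simp

lemma gauss_prod_density :
    (gaussianReal 0 1).prod (gaussianReal 0 1) =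
      (volume : Measure (ℝ × ℝ)).withDensity
        (fun p => gaussianPDF 0 1 p.1 * gaussianPDF 0 1 p.2) := by
  rw [Measure.volume_eq_prod]
  refine Measure.prod_eq fun s t hs ht => ?_
  rw [withDensity_apply _ (hs.prod ht), ← Measure.prod_restrict,
    lintegral_prod_mul (measurable_gaussianPDF 0 1).aemeasurable
      (measurable_gaussianPDF 0 1).aemeasurable,
    gaussianReal_of_var_ne_zero 0 one_ne_zero, withDensity_apply _ hs, withDensity_apply _ ht]

section rot
variable (c s : ℝ)

noncomputable def rotL : (ℝ × ℝ) →ₗ[ℝ] (ℝ × ℝ) :=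
  Matrix.toLin (Module.Basis.finTwoProd ℝ) (Module.Basis.finTwoProd ℝ) !![c, s; -s, c]

lemma rotL_apply (p : ℝ × ℝ) : rotL c s p = (c * p.1 + s * p.2, -s * p.1 + c * p.2) := by
  rw [rotL, Matrix.toLin_finTwoProd_apply]

lemma rotL_det (hcs : c ^ 2 + s ^ 2 = 1) : LinearMap.det (rotL c s) = 1 := by
  rw [rotL, LinearMap.det_toLin, Matrix.det_fin_two_of]
  nlinarith [hcs]

noncomputable def rotE (hcs : c ^ 2 + s ^ 2 = 1) : (ℝ × ℝ) ≃ᵐ (ℝ × ℝ) :=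
  (LinearEquiv.ofLinear (rotL c s) (rotL c (-s))
    (by
      apply LinearMap.ext; intro p
      simp only [LinearMap.comp_apply, rotL_apply, LinearMap.id_apply]
      obtain ⟨x, y⟩ := p
      simp only
      refine Prod.ext ?_ ?_ <;> simp only
      · linear_combination x * hcs
      · linear_combination y * hcs
      )
    (by
      apply LinearMap.ext; intro p
      simp only [LinearMap.comp_apply, rotL_apply, LinearMap.id_apply]
      obtain ⟨x, y⟩ := p
      simp only
      refine Prod.ext ?_ ?_ <;> simp only
      · linear_combination x * hcs
      · linear_combination y * hcs
      )).toContinuousLinearEquiv.toHomeomorph.toMeasurableEquiv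

lemma rotE_coe (hcs : c ^ 2 + s ^ 2 = 1) : ⇑(rotE c s hcs) = ⇑(rotL c s) := rfl

lemma rotE_symm_coe (hcs : c ^ 2 + s ^ 2 = 1) : ⇑(rotE c s hcs).symm = ⇑(rotL c (-s)) := rfl

lemma rot_volume (hcs : c ^ 2 + s ^ 2 = 1) :
    Measure.map (rotE c s hcs) (volume : Measure (ℝ × ℝ)) = volume := by
  rw [rotE_coe, Measure.map_linearMap_addHaar_eq_smul_addHaar _ (by rw [rotL_det c s hcs]; norm_num),
    rotL_det c s hcs]
  simp
end rot

lemma gauss_rot_invariant (c s : ℝ) (hcs : c ^ 2 + s ^ 2 = 1) :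
    Measure.map (rotE c s hcs) ((gaussianReal 0 1).prod (gaussianReal 0 1)) =
      (gaussianReal 0 1).prod (gaussianReal 0 1) := by
  rw [gauss_prod_density,
    my_map_equiv_withDensity _ _ (show Measurable fun p : ℝ × ℝ => gaussianPDF 0 1 p.1 * gaussianPDF 0 1 p.2 from
      ((measurable_gaussianPDF 0 1).comp measurable_fst).mul
      ((measurable_gaussianPDF 0 1).comp measurable_snd)),
    rot_volume c s hcs]
  congr 1
  funext p
  simp only [Function.comp_apply, rotE_symm_coe, rotL_apply]
  obtain ⟨x, y⟩ := p
  simp only [gaussianPDF]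
  rw [← ENNReal.ofReal_mul (gaussianPDFReal_nonneg _ _ _),
    ← ENNReal.ofReal_mul (gaussianPDFReal_nonneg _ _ _)]
  congr 1
  simp only [gaussianPDFReal, sub_zero, NNReal.coe_one, mul_one]
  rw [mul_mul_mul_comm, mul_mul_mul_comm _ (Real.exp _), ← Real.exp_add, ← Real.exp_add]
  congr 1
  have : (c * x + -(-s) * y) ^ 2 + (-s * x + c * y) ^ 2 = x ^ 2 + y ^ 2 := by ring_nf; nlinarith [hcs]
  field_simp
  congr 1
  linear_combination (-(x ^ 2 + y ^ 2) / 2) * hcs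

lemma gauss_proj (c s : ℝ) (hcs : c ^ 2 + s ^ 2 = 1) :
    Measure.map (fun p : ℝ × ℝ => c * p.1 + s * p.2)
      ((gaussianReal 0 1).prod (gaussianReal 0 1)) = gaussianReal 0 1 := by
  have h1 : (fun p : ℝ × ℝ => c * p.1 + s * p.2) = Prod.fst ∘ ⇑(rotE c s hcs) := by
    funext p; simp [rotE_coe, rotL_apply]
  rw [h1, ← Measure.map_map measurable_fst (rotE c s hcs).measurable,
    gauss_rot_invariant c s hcs, Measure.map_fst_prod]
  simp

lemma gauss_combine (p q : ℝ) (hq : q ≠ 0) :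
    Measure.map (fun z : ℝ × ℝ => p * z.1 + q * z.2)
      ((gaussianReal 0 1).prod (gaussianReal 0 1)) =
    Measure.map (fun z : ℝ => Real.sqrt (p ^ 2 + q ^ 2) * z) (gaussianReal 0 1) := by
  set r : ℝ := Real.sqrt (p ^ 2 + q ^ 2) with hr
  have hr2 : r ^ 2 = p ^ 2 + q ^ 2 := Real.sq_sqrt (by positivity)
  have hrpos : 0 < r := Real.sqrt_pos.mpr (by positivity)
  have hcs : (p / r) ^ 2 + (q / r) ^ 2 = 1 := by
    field_simp
    linarith
  have h1 : (fun z : ℝ × ℝ => p * z.1 + q * z.2) =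
      (fun x : ℝ => r * x) ∘ (fun z : ℝ × ℝ => (p / r) * z.1 + (q / r) * z.2) := by
    funext z; simp only [Function.comp_apply]; field_simp
  rw [h1, ← Measure.map_map (by fun_prop) (by fun_prop), gauss_proj _ _ hcs]

noncomputable def Xrec (α : ℕ → ℝ) : ℕ → (Option ℕ → ℝ) → ℝ
  | 0 => fun v => v none
  | (t + 1) => fun v => α t * Xrec α t v + Real.sqrt (1 - (α t) ^ 2) * v (some t)

lemma Xrec_measurable (α : ℕ → ℝ) : ∀ t, Measurable (Xrec α t) := by
  intro t
  induction t with
  | zero => exact measurable_pi_apply none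
  | succ t ih =>
    exact (measurable_const.mul ih).add (measurable_const.mul (measurable_pi_apply (some t)))

lemma Xrec_congr (α : ℕ → ℝ) : ∀ t (v w : Option ℕ → ℝ), v none = w none →
    (∀ s, s < t → v (some s) = w (some s)) → Xrec α t v = Xrec α t w := by
  intro t
  induction t with
  | zero => intro v w h0 _; exact h0
  | succ t ih =>
    intro v w h0 hs
    simp only [Xrec]
    rw [ih v w h0 (fun s hst => hs s (hst.trans (Nat.lt_succ_self t))),
      hs t (Nat.lt_succ_self t)]

theorem af_collapsed_joint_law
    {Ω : Type*} [MeasurableSpace Ω] (Pr : Measure Ω) [IsProbabilityMeasure Pr]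
    (X₀ : Ω → ℝ) (Z : ℕ → Ω → ℝ)
    (hX₀ : Measurable X₀) (hZmeas : ∀ t, Measurable (Z t))
    (hindep : iIndepFun
      (fun i : Option ℕ => Option.elim i X₀ Z) Pr)
    (hZlaw : ∀ t, Measure.map (Z t) Pr = gaussianReal 0 1)
    (α : ℕ → ℝ) (hα : ∀ t, 0 ≤ α t ∧ α t < 1)
    (X : ℕ → Ω → ℝ) (hX0 : X 0 = X₀)
    (hrec : ∀ t, X (t + 1) =
      fun ω => α t * X t ω + Real.sqrt (1 - (α t) ^ 2) * Z t ω)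
    (H : ℕ) (hH : 1 ≤ H) :
    Measure.map (fun ω => (X₀ ω, X H ω)) Pr =
      Measure.map
        (fun ω => (X₀ ω,
          (∏ t ∈ Finset.range H, α t) * X₀ ω +
            Real.sqrt (1 - (∏ t ∈ Finset.range H, α t) ^ 2) * Z 0 ω)) Pr := by
  set f : Option ℕ → Ω → ℝ := fun i => Option.elim i X₀ Z with hf
  have hfmeas : ∀ i, Measurable (f i) := by
    intro i; cases i with
    | none => exact hX₀
    | some t => exact hZmeas t
  have hXmeas : ∀ t, Measurable (X t) := by
    intro t
    induction t with
    | zero => rw [hX0]; exact hX₀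
    | succ t ih =>
      rw [hrec]
      exact (measurable_const.mul ih).add (measurable_const.mul (hZmeas t))
  have hXrep : ∀ t ω, X t ω = Xrec α t (fun i => f i ω) := by
    intro t
    induction t with
    | zero => intro ω; rw [hX0]; rfl
    | succ t ih => intro ω; rw [hrec]; simp only [Xrec, ← ih ω]; rfl
  -- independence of the pair (X₀, X H) from Z H
  have hpairindep : ∀ H : ℕ, IndepFun (fun ω => (X₀ ω, X H ω)) (Z H) Pr := by
    intro H
    set S : Finset (Option ℕ) := insert none ((Finset.range H).image some) with hS
    set T : Finset (Option ℕ) := {some H} with hT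
    have hST : Disjoint S T := by
      rw [Finset.disjoint_left]
      intro i hi hiT
      rw [hT, Finset.mem_singleton] at hiT
      subst hiT
      rw [hS, Finset.mem_insert] at hi
      rcases hi with h | h
      · exact absurd h (Option.some_ne_none _)
      · obtain ⟨t, ht, hts⟩ := Finset.mem_image.mp h
        rw [Option.some.injEq] at hts
        subst hts
        exact absurd (Finset.mem_range.mp ht) (lt_irrefl _)
    have hbase := hindep.indepFun_finset S T hST hfmeas
    set ext : ((i : S) → ℝ) → Option ℕ → ℝ :=
      fun v i => if h : i ∈ S then v ⟨i, h⟩ else 0 with hext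
    have hextmeas : Measurable ext := by
      apply measurable_pi_lambda
      intro i
      by_cases h : i ∈ S
      · simp only [hext, dif_pos h]; exact measurable_pi_apply _
      · simp only [hext, dif_neg h]; exact measurable_const
    set φ : ((i : S) → ℝ) → ℝ × ℝ := fun v => (ext v none, Xrec α H (ext v)) with hφ
    have hφmeas : Measurable φ :=
      ((measurable_pi_apply none).comp hextmeas).prodMk ((Xrec_measurable α H).comp hextmeas)
    set ψ : ((i : T) → ℝ) → ℝ := fun v => v ⟨some H, Finset.mem_singleton_self _⟩ with hψ
    have hψmeas : Measurable ψ := measurable_pi_apply _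
    have hcomp := hbase.comp hφmeas hψmeas
    have hnoneS : (none : Option ℕ) ∈ S := Finset.mem_insert_self _ _
    have h1 : (φ ∘ fun ω (i : S) => f i ω) = fun ω => (X₀ ω, X H ω) := by
      funext ω
      simp only [Function.comp_apply, hφ]
      have e1 : ext (fun i : S => f i ω) none = X₀ ω := by
        simp only [hext, dif_pos hnoneS]; rfl
      have e2 : Xrec α H (ext fun i : S => f i ω) = X H ω := by
        rw [Xrec_congr α H _ (fun i => f i ω)]
        · exact (hXrep H ω).symm
        · simp only [hext, dif_pos hnoneS]
        · intro t ht
          have htS : (some t : Option ℕ) ∈ S :=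
            Finset.mem_insert_of_mem (Finset.mem_image_of_mem some (Finset.mem_range.mpr ht))
          simp only [hext, dif_pos htS]
      rw [e1, e2]
    have h2 : (ψ ∘ fun ω (i : T) => f i ω) = Z H := by
      funext ω; rfl
    rw [h1, h2] at hcomp
    exact hcomp
  have hA0 : ∀ n, (0:ℝ) ≤ ∏ t ∈ Finset.range n, α t :=
    fun n => Finset.prod_nonneg (fun t _ => (hα t).1)
  have hA1 : ∀ n, ∏ t ∈ Finset.range n, α t ≤ 1 :=
    fun n => Finset.prod_le_one (fun t _ => (hα t).1) (fun t _ => (hα t).2.le)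
  have key : ∀ n : ℕ, Measure.map (fun ω => (X₀ ω, X n ω)) Pr =
      Measure.map (fun p : ℝ × ℝ => (p.1, (∏ t ∈ Finset.range n, α t) * p.1 +
        Real.sqrt (1 - (∏ t ∈ Finset.range n, α t) ^ 2) * p.2))
        ((Pr.map X₀).prod (gaussianReal 0 1)) := by
    intro n
    induction n with
    | zero =>
      simp only [Finset.prod_range_zero, one_pow, sub_self, Real.sqrt_zero, zero_mul,
        add_zero, one_mul]
      have hl : (fun ω => (X₀ ω, X 0 ω)) = (fun x : ℝ => (x, x)) ∘ X₀ := by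
        funext ω; rw [hX0]; rfl
      have hr : (fun p : ℝ × ℝ => (p.1, p.1)) = (fun x : ℝ => (x, x)) ∘ Prod.fst := rfl
      rw [hl, hr, ← Measure.map_map (by fun_prop) hX₀,
        ← Measure.map_map (by fun_prop) measurable_fst, Measure.map_fst_prod]
      rw [measure_univ, one_smul]
    | succ n ih =>
      have hαn := hα n
      set a : ℝ := ∏ t ∈ Finset.range n, α t with ha
      rw [Finset.prod_range_succ, ← ha]
      set b : ℝ := Real.sqrt (1 - a ^ 2) with hb
      set c : ℝ := Real.sqrt (1 - α n ^ 2) with hc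
      have hb2 : b ^ 2 = 1 - a ^ 2 := Real.sq_sqrt (by nlinarith [hA0 n, hA1 n])
      have hc2 : c ^ 2 = 1 - α n ^ 2 := Real.sq_sqrt (by nlinarith [hαn.1, hαn.2])
      have hcne : c ≠ 0 := by
        rw [hc]
        exact (Real.sqrt_pos.mpr (by nlinarith [hαn.1, hαn.2])).ne'
      have htriple : Measure.map (fun ω => ((X₀ ω, X n ω), Z n ω)) Pr
          = (Measure.map (fun ω => (X₀ ω, X n ω)) Pr).prod (gaussianReal 0 1) := by
        rw [← hZlaw n]
        exact (indepFun_iff_map_prod_eq_prod_map_map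
          ((hX₀.prodMk (hXmeas n)).aemeasurable) (hZmeas n).aemeasurable).mp (hpairindep n)
      set g : (ℝ × ℝ) × ℝ → ℝ × ℝ := fun q => (q.1.1, α n * q.1.2 + c * q.2) with hg
      have hgmeas : Measurable g :=
        (measurable_fst.comp measurable_fst).prodMk
          ((measurable_const.mul (measurable_snd.comp measurable_fst)).add
            (measurable_const.mul measurable_snd))
      set fH : ℝ × ℝ → ℝ × ℝ := fun p => (p.1, a * p.1 + b * p.2) with hfH
      have hfHmeas : Measurable fH :=
        measurable_fst.prodMk
          ((measurable_const.mul measurable_fst).add (measurable_const.mul measurable_snd))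
      have h1 : (fun ω => (X₀ ω, X (n+1) ω)) = g ∘ (fun ω => ((X₀ ω, X n ω), Z n ω)) := by
        funext ω; simp only [hrec n, hg, Function.comp_apply, ← hc]
      rw [h1, ← Measure.map_map hgmeas ((hX₀.prodMk (hXmeas n)).prodMk (hZmeas n)),
        htriple, ih]
      have hstep1 : (Measure.map fH ((Pr.map X₀).prod (gaussianReal 0 1))).prod (gaussianReal 0 1)
          = Measure.map (Prod.map fH id)
              (((Pr.map X₀).prod (gaussianReal 0 1)).prod (gaussianReal 0 1)) := by
        have h := Measure.map_prod_map ((Pr.map X₀).prod (gaussianReal 0 1)) (gaussianReal 0 1)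
          hfHmeas (measurable_id (α := ℝ))
        rwa [Measure.map_id] at h
      rw [hstep1, Measure.map_map hgmeas (hfHmeas.prodMap measurable_id)]
      set T : ℝ × ℝ → ℝ := fun z => (α n * b) * z.1 + c * z.2 with hT
      have hTmeas : Measurable T :=
        (measurable_const.mul measurable_fst).add (measurable_const.mul measurable_snd)
      set outer : ℝ × ℝ → ℝ × ℝ := fun p => (p.1, (a * α n) * p.1 + p.2) with houter
      have houtermeas : Measurable outer :=
        measurable_fst.prodMk ((measurable_const.mul measurable_fst).add measurable_snd)
      have hcoe : (⇑(MeasurableEquiv.prodAssoc (α := ℝ) (β := ℝ) (γ := ℝ)).symm) ∘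
          ⇑(MeasurableEquiv.prodAssoc (α := ℝ) (β := ℝ) (γ := ℝ)) = id := by
        funext q; simp
      have hassoc : (((Pr.map X₀).prod (gaussianReal 0 1)).prod (gaussianReal 0 1))
          = Measure.map (⇑(MeasurableEquiv.prodAssoc (α := ℝ) (β := ℝ) (γ := ℝ)).symm)
            ((Pr.map X₀).prod ((gaussianReal 0 1).prod (gaussianReal 0 1))) := by
        rw [← Measure.prodAssoc_prod, Measure.map_map (MeasurableEquiv.measurable _)
          (MeasurableEquiv.measurable _), hcoe, Measure.map_id]
      have e3 : Measure.map (g ∘ Prod.map fH id)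
            (((Pr.map X₀).prod (gaussianReal 0 1)).prod (gaussianReal 0 1))
          = Measure.map ((g ∘ Prod.map fH id) ∘
              ⇑(MeasurableEquiv.prodAssoc (α := ℝ) (β := ℝ) (γ := ℝ)).symm)
            ((Pr.map X₀).prod ((gaussianReal 0 1).prod (gaussianReal 0 1))) := by
        rw [hassoc, Measure.map_map (hgmeas.comp (hfHmeas.prodMap measurable_id))
          (MeasurableEquiv.measurable _)]
      have e4 : (g ∘ Prod.map fH id) ∘
            ⇑(MeasurableEquiv.prodAssoc (α := ℝ) (β := ℝ) (γ := ℝ)).symm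
          = outer ∘ Prod.map id T := by
        funext q
        obtain ⟨x, z₁, z₂⟩ := q
        simp only [Function.comp_apply, MeasurableEquiv.prodAssoc, MeasurableEquiv.symm_mk,
          MeasurableEquiv.coe_mk, Equiv.prodAssoc_symm_apply, Prod.map_apply, id_eq,
          hg, hfH, houter, hT]
        refine Prod.ext rfl ?_
        simp only
        ring
      rw [e3, e4, ← Measure.map_map houtermeas (measurable_id.prodMap hTmeas)]
      have e5 : Measure.map (Prod.map id T)
            ((Pr.map X₀).prod ((gaussianReal 0 1).prod (gaussianReal 0 1)))
          = (Pr.map X₀).prod (Measure.map T ((gaussianReal 0 1).prod (gaussianReal 0 1))) := by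
        rw [← Measure.map_prod_map _ _ (measurable_id (α := ℝ)) hTmeas, Measure.map_id]
      have e6 : Measure.map T ((gaussianReal 0 1).prod (gaussianReal 0 1))
          = Measure.map (fun z : ℝ => Real.sqrt (1 - (a * α n) ^ 2) * z) (gaussianReal 0 1) := by
        have harg : (α n * b) ^ 2 + c ^ 2 = 1 - (a * α n) ^ 2 := by
          linear_combination (α n) ^ 2 * hb2 + hc2
        rw [hT, gauss_combine _ _ hcne, harg]
      have e7 : (Pr.map X₀).prod
            (Measure.map (fun z : ℝ => Real.sqrt (1 - (a * α n) ^ 2) * z) (gaussianReal 0 1))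
          = Measure.map (Prod.map id (fun z : ℝ => Real.sqrt (1 - (a * α n) ^ 2) * z))
              ((Pr.map X₀).prod (gaussianReal 0 1)) := by
        rw [← Measure.map_prod_map _ _ (measurable_id (α := ℝ)) (measurable_const_mul _),
          Measure.map_id]
      rw [e5, e6, e7,
        Measure.map_map houtermeas (measurable_id.prodMap (measurable_const_mul _))]
      rfl
  have hZ0indep : IndepFun X₀ (Z 0) Pr := by
    have h := hindep.indepFun (i := none) (j := some 0) (by simp)
    exact h
  have hpair0 : Measure.map (fun ω => (X₀ ω, Z 0 ω)) Pr
      = (Pr.map X₀).prod (gaussianReal 0 1) := by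
    rw [← hZlaw 0]
    exact (indepFun_iff_map_prod_eq_prod_map_map hX₀.aemeasurable
      (hZmeas 0).aemeasurable).mp hZ0indep
  rw [key H]
  have hrhs : (fun ω => (X₀ ω, (∏ t ∈ Finset.range H, α t) * X₀ ω +
        Real.sqrt (1 - (∏ t ∈ Finset.range H, α t) ^ 2) * Z 0 ω))
      = (fun p : ℝ × ℝ => (p.1, (∏ t ∈ Finset.range H, α t) * p.1 +
          Real.sqrt (1 - (∏ t ∈ Finset.range H, α t) ^ 2) * p.2)) ∘
        (fun ω => (X₀ ω, Z 0 ω)) := rfl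
  rw [hrhs, ← Measure.map_map (g := fun p : ℝ × ℝ => (p.1, (∏ t ∈ Finset.range H, α t) * p.1 +
          Real.sqrt (1 - (∏ t ∈ Finset.range H, α t) ^ 2) * p.2))
      (measurable_fst.prodMk ((measurable_const.mul measurable_fst).add
        (measurable_const.mul measurable_snd)))
      (hX₀.prodMk (hZmeas 0)), hpair0]
end

section
/- Let (Ω, ℙ) be a probability space, X₀ : Ω → ℝ a random variable, and (Z_t)_{t∈ℕ} a sequence of random variables such that the family {X₀} ∪ {Z_t : t ∈ ℕ} is jointly independent and each Z_t has law gaussianReal 0 1. Let α, α' : ℕ → ℝ be two schedules with 0 ≤ α_t < 1 and 0 ≤ α'_t < 1 for all t, and define the two recursions X_{t+1} = α_t · X_t + √(1 − α_t²) · Z_t and X'_{t+1} = α'_t · X'_t + √(1 − α'_t²) · Z_t, both started from X₀. If H, H' ≥ 1 satisfy ∏_{t=0}^{H−1} α_t = ∏_{t=0}^{H'−1} α'_t, then the joint law of (X₀, X_H) equals the joint law of (X₀, X'_{H'}). In particular, the end-to-end channel from X₀ to the output depends on the schedule only through the cumulative product ᾱ, irrespective of the number of steps or the allocation of attenuation and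 noise across steps. -/
open MeasureTheory ProbabilityTheory Real
open scoped NNReal ENNReal

lemma af_pdf_swap (p q y x : ℝ) (hq : q ≠ 0) :
    gaussianPDFReal 0 1 x * gaussianPDFReal (p * x) (q ^ 2).toNNReal y =
      gaussianPDFReal 0 (p ^ 2 + q ^ 2).toNNReal y *
        gaussianPDFReal (p * y / (p ^ 2 + q ^ 2)) (q ^ 2 / (p ^ 2 + q ^ 2)).toNNReal x := by
  have hq2 : (0:ℝ) < q ^ 2 := by positivity
  have hs : (0:ℝ) < p ^ 2 + q ^ 2 := by positivity
  simp only [gaussianPDFReal, NNReal.coe_one]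
  rw [Real.coe_toNNReal _ hq2.le, Real.coe_toNNReal _ hs.le,
    Real.coe_toNNReal _ (by positivity : (0:ℝ) ≤ q ^ 2 / (p ^ 2 + q ^ 2))]
  rw [mul_mul_mul_comm, mul_mul_mul_comm ((√(2 * π * (p ^ 2 + q ^ 2)))⁻¹)]
  congr 1
  · rw [← mul_inv, ← mul_inv, ← Real.sqrt_mul (by positivity), ← Real.sqrt_mul (by positivity)]
    congr 1
    field_simp
  · rw [← Real.exp_add, ← Real.exp_add]
    congr 1
    field_simp
    ring

lemma af_map_lin (p q : ℝ) (hq : q ≠ 0) :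
    Measure.map (fun z : ℝ × ℝ => p * z.1 + q * z.2)
        ((gaussianReal 0 1).prod (gaussianReal 0 1)) =
      gaussianReal 0 (p ^ 2 + q ^ 2).toNNReal := by
  have hq2 : (0:ℝ) < q ^ 2 := by positivity
  have hs2 : (0:ℝ) < p ^ 2 + q ^ 2 := by positivity
  have hqv : ((q ^ 2).toNNReal : ℝ≥0) ≠ 0 := by
    simp [Real.toNNReal_pos.2 hq2, ne_of_gt]
  have hsv : ((p ^ 2 + q ^ 2).toNNReal : ℝ≥0) ≠ 0 := by
    simp [Real.toNNReal_pos.2 hs2, ne_of_gt]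
  have hwv : ((q ^ 2 / (p ^ 2 + q ^ 2)).toNNReal : ℝ≥0) ≠ 0 := by
    simp [Real.toNNReal_pos.2 (div_pos hq2 hs2), ne_of_gt]
  have hmeas : Measurable (fun z : ℝ × ℝ => p * z.1 + q * z.2) := by fun_prop
  -- slice law
  have hslice : ∀ x : ℝ, Measure.map (fun y => p * x + q * y) (gaussianReal 0 1)
      = gaussianReal (p * x) (q ^ 2).toNNReal := by
    intro x
    have : (fun y => p * x + q * y) = (fun y => p * x + y) ∘ (fun y => q * y) := rfl
    rw [this, ← Measure.map_map (by fun_prop) (by fun_prop),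
      gaussianReal_map_const_mul q, gaussianReal_map_const_add (p * x)]
    congr 1
    · ring
    · ext
      simp [Real.coe_toNNReal _ hq2.le]
  ext s hs
  rw [Measure.map_apply hmeas hs, Measure.prod_apply (hmeas hs)]
  have hpre : ∀ x : ℝ, (Prod.mk x ⁻¹' ((fun z : ℝ × ℝ => p * z.1 + q * z.2) ⁻¹' s))
      = (fun y => p * x + q * y) ⁻¹' s := fun _ => rfl
  calc ∫⁻ x, (gaussianReal 0 1) (Prod.mk x ⁻¹' ((fun z : ℝ × ℝ => p * z.1 + q * z.2) ⁻¹' s))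
        ∂(gaussianReal 0 1)
      = ∫⁻ x, ∫⁻ y in s, gaussianPDF (p * x) (q ^ 2).toNNReal y ∂(volume)
          ∂(gaussianReal 0 1) := by
        refine lintegral_congr fun x => ?_
        rw [hpre x, ← Measure.map_apply (by fun_prop) hs, hslice x,
          gaussianReal_apply _ hqv]
    _ = ∫⁻ x, gaussianPDF 0 1 x * ∫⁻ y in s, gaussianPDF (p * x) (q ^ 2).toNNReal y ∂(volume)
          ∂(volume) := by
        rw [gaussianReal_of_var_ne_zero 0 one_ne_zero,
          lintegral_withDensity_eq_lintegral_mul _ (measurable_gaussianPDF _ _)]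
        · rfl
        · apply Measurable.lintegral_prod_right (ν := volume.restrict s)
          unfold Function.uncurry gaussianPDF gaussianPDFReal
          fun_prop
    _ = ∫⁻ x, ∫⁻ y in s, gaussianPDF 0 1 x * gaussianPDF (p * x) (q ^ 2).toNNReal y ∂(volume)
          ∂(volume) := by
        refine lintegral_congr fun x => ?_
        rw [lintegral_const_mul _ (measurable_gaussianPDF _ _)]
    _ = ∫⁻ y in s, ∫⁻ x, gaussianPDF 0 1 x * gaussianPDF (p * x) (q ^ 2).toNNReal y ∂(volume)
          ∂(volume) := by
        apply lintegral_lintegral_swap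
        apply Measurable.aemeasurable
        unfold Function.uncurry gaussianPDF gaussianPDFReal
        fun_prop
    _ = ∫⁻ y in s, gaussianPDF 0 (p ^ 2 + q ^ 2).toNNReal y ∂(volume) := by
        refine lintegral_congr fun y => ?_
        have : ∀ x : ℝ, gaussianPDF 0 1 x * gaussianPDF (p * x) (q ^ 2).toNNReal y
            = gaussianPDF 0 (p ^ 2 + q ^ 2).toNNReal y *
              gaussianPDF (p * y / (p ^ 2 + q ^ 2)) ((q ^ 2 / (p ^ 2 + q ^ 2))).toNNReal x := by
          intro x
          simp only [gaussianPDF, ← ENNReal.ofReal_mul (gaussianPDFReal_nonneg _ _ _)]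
          rw [af_pdf_swap p q y x hq]
        simp_rw [this]
        rw [lintegral_const_mul _ (measurable_gaussianPDF _ _),
          lintegral_gaussianPDF_eq_one _ hwv, mul_one]
    _ = gaussianReal 0 (p ^ 2 + q ^ 2).toNNReal s := (gaussianReal_apply _ hsv s).symm

noncomputable def afXi (α : ℕ → ℝ) : ℕ → (Option ℕ → ℝ) → ℝ
  | 0 => fun v => v none
  | (t+1) => fun v => α t * afXi α t v + Real.sqrt (1 - (α t) ^ 2) * v (some t)

lemma afXi_measurable (α : ℕ → ℝ) : ∀ t, Measurable (afXi α t) := by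
  intro t
  induction t with
  | zero => exact measurable_pi_apply none
  | succ t ih =>
      exact ((ih.const_mul _).add ((measurable_pi_apply (some t)).const_mul _))

lemma afXi_congr (α : ℕ → ℝ) : ∀ (t : ℕ) (v w : Option ℕ → ℝ),
    v none = w none → (∀ s < t, v (some s) = w (some s)) → afXi α t v = afXi α t w := by
  intro t
  induction t with
  | zero => intro v w h0 _; exact h0
  | succ t ih =>
      intro v w h0 hs
      simp only [afXi]
      rw [ih v w h0 (fun s hst => hs s (Nat.lt_succ_of_lt hst)), hs t (Nat.lt_succ_self t)]

lemma af_chain_pair_indep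
    {Ω : Type*} [MeasurableSpace Ω] (Pr : Measure Ω) [IsProbabilityMeasure Pr]
    (X₀ : Ω → ℝ) (Z : ℕ → Ω → ℝ)
    (hX₀ : Measurable X₀) (hZmeas : ∀ t, Measurable (Z t))
    (hindep : iIndepFun
      (fun i : Option ℕ => Option.elim i X₀ Z) Pr)
    (α : ℕ → ℝ) (X : ℕ → Ω → ℝ) (hX0 : X 0 = X₀)
    (hrec : ∀ t, X (t + 1) =
      fun ω => α t * X t ω + Real.sqrt (1 - (α t) ^ 2) * Z t ω)
    (H : ℕ) :
    IndepFun (fun ω => (X₀ ω, X H ω)) (Z H) Pr := by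
  classical
  set f : Option ℕ → Ω → ℝ := fun i => Option.elim i X₀ Z with hf
  have hfmeas : ∀ i, Measurable (f i) := by
    intro i; cases i
    · exact hX₀
    · exact hZmeas _
  have hXξ : ∀ (t : ℕ) (ω : Ω), X t ω = afXi α t (fun i => f i ω) := by
    intro t
    induction t with
    | zero => intro ω; rw [hX0]; rfl
    | succ t ih => intro ω; rw [hrec]; simp only [afXi, ih ω]; rfl
  set S : Finset (Option ℕ) := insert none ((Finset.range H).image some) with hS
  have hnone : none ∈ S := Finset.mem_insert_self _ _
  have hsome : ∀ s < H, some s ∈ S := fun s hs =>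
    Finset.mem_insert_of_mem (Finset.mem_image_of_mem some (Finset.mem_range.2 hs))
  have hdisj : Disjoint S ({some H} : Finset (Option ℕ)) := by
    simp only [Finset.disjoint_singleton_right, hS]
    simp
  set gmap : ({i // i ∈ S} → ℝ) → (Option ℕ → ℝ) :=
    fun u i => if h : i ∈ S then u ⟨i, h⟩ else 0 with hgmap
  have hgmap_meas : Measurable gmap := by
    apply measurable_pi_lambda
    intro i
    by_cases h : i ∈ S
    · simp only [hgmap, dif_pos h]; exact measurable_pi_apply _
    · simp only [hgmap, dif_neg h]; exact measurable_const
  set g : ({i // i ∈ S} → ℝ) → ℝ × ℝ :=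
    fun u => (u ⟨none, hnone⟩, afXi α H (gmap u)) with hg
  have hg_meas : Measurable g :=
    (measurable_pi_apply _).prodMk ((afXi_measurable α H).comp hgmap_meas)
  set h : ({i // i ∈ ({some H} : Finset (Option ℕ))} → ℝ) → ℝ :=
    fun u => u ⟨some H, Finset.mem_singleton_self _⟩ with hh
  have hh_meas : Measurable h := measurable_pi_apply _
  have hI := (hindep.indepFun_finset S {some H} hdisj hfmeas).comp hg_meas hh_meas
  have e1 : (g ∘ fun ω (i : {i // i ∈ S}) => f i ω) = fun ω => (X₀ ω, X H ω) := by
    funext ω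
    simp only [Function.comp, hg]
    refine Prod.ext rfl ?_
    rw [hXξ H ω]
    apply afXi_congr
    · simp [hgmap, hnone]
    · intro s hs
      simp [hgmap, hsome s hs]
  have e2 : (h ∘ fun ω (i : {i // i ∈ ({some H} : Finset (Option ℕ))}) => f i ω) = Z H := by
    funext ω; rfl
  rwa [e1, e2] at hI

lemma af_chain_law
    {Ω : Type*} [MeasurableSpace Ω] (Pr : Measure Ω) [IsProbabilityMeasure Pr]
    (X₀ : Ω → ℝ) (Z : ℕ → Ω → ℝ)
    (hX₀ : Measurable X₀) (hZmeas : ∀ t, Measurable (Z t))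
    (hindep : iIndepFun
      (fun i : Option ℕ => Option.elim i X₀ Z) Pr)
    (hZlaw : ∀ t, Measure.map (Z t) Pr = gaussianReal 0 1)
    (α : ℕ → ℝ) (hα : ∀ t, 0 ≤ α t ∧ α t < 1)
    (X : ℕ → Ω → ℝ) (hX0 : X 0 = X₀)
    (hrec : ∀ t, X (t + 1) =
      fun ω => α t * X t ω + Real.sqrt (1 - (α t) ^ 2) * Z t ω)
    (H : ℕ) :
    Measure.map (fun ω => (X₀ ω, X H ω)) Pr =
      Measure.map (fun r : ℝ × ℝ => (r.1, (∏ t ∈ Finset.range H, α t) * r.1 + r.2))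
        ((Measure.map X₀ Pr).prod
          (gaussianReal 0 (1 - (∏ t ∈ Finset.range H, α t) ^ 2).toNNReal)) := by
  have hXmeas : ∀ t, Measurable (X t) := by
    intro t
    induction t with
    | zero => rw [hX0]; exact hX₀
    | succ t ih => rw [hrec]; exact (ih.const_mul _).add ((hZmeas t).const_mul _)
  have hprodmem : ∀ H : ℕ, 0 ≤ ∏ t ∈ Finset.range H, α t ∧ ∏ t ∈ Finset.range H, α t ≤ 1 := by
    intro H
    constructor
    · exact Finset.prod_nonneg fun t _ => (hα t).1
    · exact Finset.prod_le_one (fun t _ => (hα t).1) (fun t _ => (hα t).2.le)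
  induction H with
  | zero =>
      simp only [Finset.range_zero, Finset.prod_empty, one_pow, sub_self, Real.toNNReal_zero,
        gaussianReal_zero_var, Measure.prod_dirac]
      rw [Measure.map_map (by fun_prop) (by fun_prop),
        show X 0 = X₀ from hX0,
        show ((fun r : ℝ × ℝ => (r.1, 1 * r.1 + r.2)) ∘ fun x : ℝ => (x, (0:ℝ)))
          = fun x : ℝ => (x, x) by funext x; simp,
        Measure.map_map (by fun_prop) hX₀]
      rfl
  | succ H ih =>
      set a := ∏ t ∈ Finset.range H, α t with ha
      have ha0 : 0 ≤ a := (hprodmem H).1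
      have ha1 : a ≤ 1 := (hprodmem H).2
      have hα0 := (hα H).1
      have hα1 := (hα H).2
      set c := Real.sqrt (1 - (α H) ^ 2) with hc
      have hc2 : c ^ 2 = 1 - (α H) ^ 2 := Real.sq_sqrt (by nlinarith)
      have hcpos : 0 < c := Real.sqrt_pos.2 (by nlinarith)
      set b := Real.sqrt (1 - a ^ 2) with hb
      have hb2 : b ^ 2 = 1 - a ^ 2 := Real.sq_sqrt (by nlinarith)
      set μ := Measure.map X₀ Pr with hμ
      set ν := gaussianReal 0 1 with hν
      set ρ := gaussianReal 0 (1 - a ^ 2).toNNReal with hρ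
      have hpair : Measure.map (fun ω => ((X₀ ω, X H ω), Z H ω)) Pr
          = (Measure.map (fun ω => (X₀ ω, X H ω)) Pr).prod ν := by
        rw [← hZlaw H]
        exact (indepFun_iff_map_prod_eq_prod_map_map
          (hX₀.prodMk (hXmeas H)).aemeasurable (hZmeas H).aemeasurable).mp
          (af_chain_pair_indep Pr X₀ Z hX₀ hZmeas hindep α X hX0 hrec H)
      have hρν : ρ = Measure.map (fun z => b * z) ν := by
        rw [hν, gaussianReal_map_const_mul b, hρ]
        congr 1
        · ring
        · ext
          simp [Real.coe_toNNReal _ (by nlinarith : (0:ℝ) ≤ 1 - a ^ 2), hb2]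
      have hT : Measure.map (fun z : ℝ × ℝ => α H * z.1 + c * z.2) (ρ.prod ν)
          = gaussianReal 0 (1 - (a * α H) ^ 2).toNNReal := by
        have hsplit : (Measure.map (fun z => b * z) ν).prod ν
            = Measure.map (Prod.map (fun z : ℝ => b * z) id) (ν.prod ν) := by
          rw [← Measure.map_prod_map _ _ (by fun_prop) measurable_id, Measure.map_id]
        have hcompT : ((fun z : ℝ × ℝ => α H * z.1 + c * z.2)
              ∘ Prod.map (fun z : ℝ => b * z) id)
            = fun z : ℝ × ℝ => (α H * b) * z.1 + c * z.2 := by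
          funext z; simp [Prod.map]; ring
        have hvar : (α H * b) ^ 2 + c ^ 2 = 1 - (a * α H) ^ 2 := by
          rw [mul_pow]; nlinarith [hb2, hc2]
        rw [hρν, hsplit, Measure.map_map (by fun_prop) (by fun_prop), hcompT,
          af_map_lin (α H * b) c hcpos.ne', hvar]
      have hstep : (fun ω => (X₀ ω, X (H + 1) ω))
          = (fun rz : (ℝ × ℝ) × ℝ => (rz.1.1, α H * rz.1.2 + c * rz.2))
            ∘ (fun ω => ((X₀ ω, X H ω), Z H ω)) := by
        funext ω; rw [hrec]; rfl
      have hsplit2 : (Measure.map (fun r : ℝ × ℝ => (r.1, a * r.1 + r.2)) (μ.prod ρ)).prod ν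
          = Measure.map (Prod.map (fun r : ℝ × ℝ => (r.1, a * r.1 + r.2)) id)
              ((μ.prod ρ).prod ν) := by
        rw [← Measure.map_prod_map _ _ (by fun_prop) measurable_id, Measure.map_id]
      have hsplit3 : Measure.map
            (Prod.map (id : ℝ → ℝ) (fun z : ℝ × ℝ => α H * z.1 + c * z.2)) (μ.prod (ρ.prod ν))
          = μ.prod (gaussianReal 0 (1 - (a * α H) ^ 2).toNNReal) := by
        rw [← Measure.map_prod_map _ _ measurable_id (by fun_prop), Measure.map_id, hT]
      have hcomp : ((fun rz : (ℝ × ℝ) × ℝ => (rz.1.1, α H * rz.1.2 + c * rz.2))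
            ∘ Prod.map (fun r : ℝ × ℝ => (r.1, a * r.1 + r.2)) id)
          = ((fun r : ℝ × ℝ => (r.1, (a * α H) * r.1 + r.2))
            ∘ (Prod.map (id : ℝ → ℝ) fun z : ℝ × ℝ => α H * z.1 + c * z.2))
            ∘ MeasurableEquiv.prodAssoc := by
        funext rz
        simp [Prod.map, MeasurableEquiv.prodAssoc]
        ring
      rw [hstep, ← Measure.map_map (by fun_prop)
          ((hX₀.prodMk (hXmeas H)).prodMk (hZmeas H)),
        hpair, ih, hsplit2, Measure.map_map (by fun_prop) (by fun_prop), hcomp,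
        ← Measure.map_map (by fun_prop) (MeasurableEquiv.measurable _),
        Measure.prodAssoc_prod,
        ← Measure.map_map (by fun_prop) (by fun_prop),
        hsplit3, Finset.prod_range_succ, ← ha]


theorem af_schedule_invariance
    {Ω : Type*} [MeasurableSpace Ω] (Pr : Measure Ω) [IsProbabilityMeasure Pr]
    (X₀ : Ω → ℝ) (Z : ℕ → Ω → ℝ)
    (hX₀ : Measurable X₀) (hZmeas : ∀ t, Measurable (Z t))
    (hindep : iIndepFun
      (fun i : Option ℕ => Option.elim i X₀ Z) Pr)
    (hZlaw : ∀ t, Measure.map (Z t) Pr = gaussianReal 0 1)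
    (α α' : ℕ → ℝ)
    (hα : ∀ t, 0 ≤ α t ∧ α t < 1) (hα' : ∀ t, 0 ≤ α' t ∧ α' t < 1)
    (X X' : ℕ → Ω → ℝ) (hX0 : X 0 = X₀) (hX'0 : X' 0 = X₀)
    (hrec : ∀ t, X (t + 1) =
      fun ω => α t * X t ω + Real.sqrt (1 - (α t) ^ 2) * Z t ω)
    (hrec' : ∀ t, X' (t + 1) =
      fun ω => α' t * X' t ω + Real.sqrt (1 - (α' t) ^ 2) * Z t ω)
    (H H' : ℕ) (hH : 1 ≤ H) (hH' : 1 ≤ H')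
    (hprod : ∏ t ∈ Finset.range H, α t = ∏ t ∈ Finset.range H', α' t) :
    Measure.map (fun ω => (X₀ ω, X H ω)) Pr =
      Measure.map (fun ω => (X₀ ω, X' H' ω)) Pr := by
  rw [af_chain_law Pr X₀ Z hX₀ hZmeas hindep hZlaw α hα X hX0 hrec H,
    af_chain_law Pr X₀ Z hX₀ hZmeas hindep hZlaw α' hα' X' hX'0 hrec' H', hprod]
end

section
/- Let c > 0, n ≥ 1, and P_tot > 0. For every P : Fin n → ℝ with P_t > 0 for all t and ∑_t P_t = P_tot, one has ∑_t log(c·P_t / (1 + c·P_t)) ≤ n · log(c·(P_tot/n) / (1 + c·(P_tot/n))), with equality if and only if P_t = P_tot/n for all t. -/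
open Real Set Finset

private lemma hasDerivAt_f (c : ℝ) (hc : 0 < c) {x : ℝ} (hx : 0 < x) :
    HasDerivAt (fun y : ℝ => Real.log (c * y) - Real.log (1 + c * y))
      (x⁻¹ - c * ((1 + c * x) ^ 2)⁻¹ * (1 + c * x)) x := by
  have hcx : c * x ≠ 0 := by positivity
  have h1cx : (1 : ℝ) + c * x ≠ 0 := by positivity
  have h1 : HasDerivAt (fun y : ℝ => Real.log (c * y)) x⁻¹ x := by
    have h := ((hasDerivAt_id x).const_mul c).log hcx
    convert h using 1
    · rfl
    · simp only [id]; rw [mul_div_mul_left _ _ hc.ne', one_div]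
  have h2 : HasDerivAt (fun y : ℝ => Real.log (1 + c * y))
      (c * ((1 + c * x) ^ 2)⁻¹ * (1 + c * x)) x := by
    have := (((hasDerivAt_id x).const_mul c).const_add 1).log h1cx
    refine (this.congr_deriv ?_)
    simp only [id]; field_simp
  exact h1.sub h2

private lemma deriv_f (c : ℝ) (hc : 0 < c) {x : ℝ} (hx : 0 < x) :
    deriv (fun y : ℝ => Real.log (c * y) - Real.log (1 + c * y)) x
      = x⁻¹ - c * (1 + c * x)⁻¹ := by
  have h1cx : (1 : ℝ) + c * x ≠ 0 := by positivity
  rw [(hasDerivAt_f c hc hx).deriv]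
  field_simp

private lemma strict_concave_f (c : ℝ) (hc : 0 < c) :
    StrictConcaveOn ℝ (Set.Ioi (0:ℝ))
      (fun y : ℝ => Real.log (c * y) - Real.log (1 + c * y)) := by
  apply strictConcaveOn_of_deriv2_neg (convex_Ioi 0)
  · exact fun x hx => (hasDerivAt_f c hc hx).continuousAt.continuousWithinAt
  · intro x hx
    rw [interior_Ioi] at hx
    have hx : (0:ℝ) < x := hx
    have h1cx : (0:ℝ) < 1 + c * x := by positivity
    have hEq : deriv (fun y : ℝ => Real.log (c * y) - Real.log (1 + c * y))
        =ᶠ[nhds x] (fun y => y⁻¹ - c * (1 + c * y)⁻¹) := by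
      filter_upwards [Ioi_mem_nhds hx] with y hy using deriv_f c hc hy
    have hd2 : HasDerivAt (fun y : ℝ => y⁻¹ - c * (1 + c * y)⁻¹)
        (-(x ^ 2)⁻¹ - c * (-c / (1 + c * x) ^ 2)) x := by
      have ha : HasDerivAt (fun y : ℝ => y⁻¹) (-(x ^ 2)⁻¹) x := by
        simpa using hasDerivAt_inv hx.ne'
      have hb : HasDerivAt (fun y : ℝ => (1 + c * y)⁻¹) (-c / (1 + c * x) ^ 2) x := by
        have := (((hasDerivAt_id x).const_mul c).const_add 1).inv h1cx.ne'
        simp only [id, mul_one] at this; exact this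
      exact ha.sub (hb.const_mul c)
    have : deriv^[2] (fun y : ℝ => Real.log (c * y) - Real.log (1 + c * y)) x
        = -(x ^ 2)⁻¹ - c * (-c / (1 + c * x) ^ 2) := by
      simp only [Function.iterate_succ, Function.iterate_zero, Function.comp_apply, id]
      rw [hEq.deriv_eq]
      exact hd2.deriv
    rw [this]
    have hlt : c ^ 2 / (1 + c * x) ^ 2 < (x ^ 2)⁻¹ := by
      rw [inv_eq_one_div, div_lt_div_iff₀ (by positivity) (by positivity)]
      nlinarith [sq_nonneg (c * x), mul_pos hc hx]
    have : -(x ^ 2)⁻¹ - c * (-c / (1 + c * x) ^ 2)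
        = c ^ 2 / (1 + c * x) ^ 2 - (x ^ 2)⁻¹ := by ring
    rw [this]; linarith

theorem equalization_principle
    (c : ℝ) (hc : 0 < c) (n : ℕ) (hn : 1 ≤ n) (Ptot : ℝ) (hPtot : 0 < Ptot)
    (P : Fin n → ℝ) (hP : ∀ t, 0 < P t) (hsum : ∑ t, P t = Ptot) :
    (∑ t, Real.log (c * P t / (1 + c * P t)) ≤
      (n : ℝ) * Real.log (c * (Ptot / n) / (1 + c * (Ptot / n)))) ∧
    ((∑ t, Real.log (c * P t / (1 + c * P t)) =
       (n : ℝ) * Real.log (c * (Ptot / n) / (1 + c * (Ptot / n)))) ↔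
     ∀ t, P t = Ptot / n) := by
  have hn0 : ((n : ℝ)) ≠ 0 := by positivity
  have hnpos : (0:ℝ) < n := by positivity
  set f : ℝ → ℝ := fun y => Real.log (c * y) - Real.log (1 + c * y) with hf
  have hterm : ∀ x : ℝ, 0 < x → Real.log (c * x / (1 + c * x)) = f x := by
    intro x hx
    exact Real.log_div (by positivity) (by positivity)
  have havgpos : 0 < Ptot / n := by positivity
  have hrw : ∑ t, Real.log (c * P t / (1 + c * P t)) = ∑ t, f (P t) :=
    Finset.sum_congr rfl fun t _ => hterm _ (hP t)
  have hrw2 : Real.log (c * (Ptot / n) / (1 + c * (Ptot / n))) = f (Ptot / n) :=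
    hterm _ havgpos
  rw [hrw, hrw2]
  have h₀ : ∀ i ∈ Finset.univ (α := Fin n), (0:ℝ) < (n : ℝ)⁻¹ := fun _ _ => by positivity
  have h₁ : ∑ _i : Fin n, ((n : ℝ)⁻¹) = 1 := by
    simp [Finset.sum_const, hn0]
  have hmem : ∀ i ∈ Finset.univ (α := Fin n), P i ∈ Set.Ioi (0:ℝ) := fun i _ => hP i
  have havg : ∑ i : Fin n, ((n : ℝ)⁻¹) • P i = Ptot / n := by
    rw [← Finset.smul_sum, hsum, smul_eq_mul, inv_mul_eq_div]
  have hcc := strict_concave_f c hc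
  have hle := hcc.concaveOn.le_map_sum (fun i _ => (h₀ i (Finset.mem_univ i)).le) h₁ hmem
  rw [havg] at hle
  have hsum_smul : ∑ i : Fin n, ((n : ℝ)⁻¹) • f (P i) = (∑ i, f (P i)) / n := by
    rw [← Finset.smul_sum, smul_eq_mul, inv_mul_eq_div]
  constructor
  · rw [hsum_smul] at hle
    calc ∑ t, f (P t) = n * ((∑ t, f (P t)) / n) := by field_simp
      _ ≤ n * f (Ptot / n) := by
          exact mul_le_mul_of_nonneg_left hle hnpos.le
  · have hiff := hcc.map_sum_eq_iff h₀ h₁ hmem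
    rw [havg] at hiff
    constructor
    · intro he
      intro t
      have : f (Ptot / n) = ∑ i : Fin n, ((n : ℝ)⁻¹) • f (P i) := by
        rw [hsum_smul, he]
        field_simp
      have h2 := this
      simp only [hf] at h2
      exact hiff.mp h2 t (Finset.mem_univ t)
    · intro he
      have : ∀ t, f (P t) = f (Ptot / n) := fun t => by rw [he t]
      rw [Finset.sum_congr rfl fun t _ => this t]
      simp [Finset.sum_const, mul_comm]
end
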